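/- arXiv:1006.4843 — 8 statements merged into one kernel-verified Lean document; each statement's English description precedes it below -/
import Mathlib

section
/- If a language L is finite, then the reflexive closure of the positive-reachability relation → on its quotients is a partial order; in particular, there is no non-empty quotient L_u with L_u → L_u. -/
def lq {α : Type*} (L : Set (List α)) (w : List α) : Set (List α) := {x | w ++ x ∈ L}

def PrefixFree {α : Type*} (L : Set (List α)) : Prop := ∀ u ∈ L, ∀ v ∈ L, u <+: v → u = v
def SuffixFree {α : Type*} (L : Set (List α)) : Prop := ∀ u ∈ L, ∀ v ∈ L, u <:+ v → u = v
def FactorFree {α : Type*} (L : Set (List α)) : Prop := ∀ u ∈ L, ∀ v ∈ L, u <:+: v → u = v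
def SubwordFree {α : Type*} (L : Set (List α)) : Prop := ∀ u ∈ L, ∀ v ∈ L, List.Sublist u v → u = v

lemma lq_append {α : Type*} (L : Set (List α)) (u x : List α) :
    lq L (u ++ x) = lq (lq L u) x := by
  ext y; simp [lq, List.append_assoc]

lemma lq_congr {α : Type*} (L : Set (List α)) {u v : List α} (h : lq L u = lq L v)
    (x : List α) : lq L (u ++ x) = lq L (v ++ x) := by
  rw [lq_append, lq_append, h]

lemma lq_pump {α : Type*} (L : Set (List α)) {u x : List α}
    (h : lq L (u ++ x) = lq L u) :
    ∀ n, lq L (u ++ (List.replicate n x).flatten) = lq L u := by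
  intro n
  induction n with
  | zero => simp
  | succ n ih =>
    have : u ++ (List.replicate (n + 1) x).flatten = (u ++ x) ++ (List.replicate n x).flatten := by
      simp [List.replicate_succ, List.append_assoc]
    rw [this, lq_append, h, ← lq_append, ih]

lemma no_self_loop {α : Type*} (L : Set (List α)) (hfin : L.Finite)
    {u x : List α} (hx : x ≠ []) (hne : lq L u ≠ ∅)
    (h : lq L (u ++ x) = lq L u) : False := by
  obtain ⟨w, hw⟩ := Set.nonempty_iff_ne_empty.mpr hne
  have hpump := lq_pump L h
  set f : ℕ → List α := fun n => (u ++ (List.replicate n x).flatten) ++ w with hf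
  have hmem : ∀ n, f n ∈ L := by
    intro n
    have : w ∈ lq L (u ++ (List.replicate n x).flatten) := by rw [hpump n]; exact hw
    exact this
  have hxlen : 0 < x.length := List.length_pos_iff.mpr hx
  have hlen : ∀ n, (f n).length = u.length + n * x.length + w.length := by
    intro n
    simp [hf, List.length_flatten, List.map_replicate, List.sum_replicate, smul_eq_mul]
    ring
  have hinj : Function.Injective f := by
    intro a b hab
    have : (f a).length = (f b).length := by rw [hab]
    rw [hlen a, hlen b] at this
    have : a * x.length = b * x.length := by omega
    exact Nat.eq_of_mul_eq_mul_right hxlen this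
  exact (Set.infinite_of_injective_forall_mem hinj hmem) hfin

theorem finite_reach_partialOrder {α : Type*} (L : Set (List α)) (hfin : L.Finite) :
    IsPartialOrder {Q : Set (List α) // ∃ u, Q = lq L u}
      (fun P Q => (P : Set (List α)) = Q ∨
        ∃ u x : List α, x ≠ [] ∧ (P : Set (List α)) = lq L u ∧
          (Q : Set (List α)) = lq L (u ++ x)) ∧
    ∀ u : List α, lq L u ≠ ∅ → ¬ ∃ x : List α, x ≠ [] ∧ lq L (u ++ x) = lq L u := by
  constructor
  · refine { refl := ?_, trans := ?_, antisymm := ?_ }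
    · intro P; exact Or.inl rfl
    · -- transitivity
      rintro P Q R (hPQ | ⟨u, x, hx, hPu, hQux⟩) hQR
      · rcases hQR with hQR | ⟨v, y, hy, hQv, hRvy⟩
        · exact Or.inl (hPQ.trans hQR)
        · exact Or.inr ⟨v, y, hy, hPQ.trans hQv, hRvy⟩
      · rcases hQR with hQR | ⟨v, y, hy, hQv, hRvy⟩
        · exact Or.inr ⟨u, x, hx, hPu, hQR ▸ hQux⟩
        · refine Or.inr ⟨u, x ++ y, by simp [hx], hPu, ?_⟩
          have h1 : lq L (u ++ x) = lq L v := hQux ▸ hQv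
          have := lq_congr L h1 y
          rw [hRvy, ← this, List.append_assoc]
    · -- antisymmetry
      rintro P Q (hPQ | ⟨u, x, hx, hPu, hQux⟩) hQP
      · exact Subtype.coe_injective hPQ
      · rcases hQP with hQP | ⟨v, y, hy, hQv, hPvy⟩
        · exact Subtype.coe_injective hQP.symm
        · have h1 : lq L (u ++ x) = lq L v := hQux ▸ hQv
          have h2 : (P : Set (List α)) = lq L (u ++ (x ++ y)) := by
            rw [hPvy, ← List.append_assoc, lq_congr L h1.symm y]
          have hloop : lq L (u ++ (x ++ y)) = lq L u := by rw [← h2, hPu]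
          by_cases hPe : lq L u = ∅
          · apply Subtype.coe_injective
            show (P : Set (List α)) = (Q : Set (List α))
            rw [hPu, hQux, lq_append, hPe]
            ext z; simp [lq]
          · exact absurd hloop (fun h =>
              no_self_loop L hfin (by simp [hx]) hPe h)
  · intro u hne ⟨x, hx, h⟩
    exact no_self_loop L hfin hx hne h
end

section
/- If K and L are bifix-free regular languages with m and n quotients respectively, where m, n ≥ 4, then the intersection K ∩ L has at most mn − 3(m + n − 4) distinct quotients. -/
lemma ncard_prod' {β γ : Type*} (s : Set β) (t : Set γ) :
    (s ×ˢ t).ncard = s.ncard * t.ncard := by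
  rw [← Nat.card_coe_set_eq, ← Nat.card_coe_set_eq, ← Nat.card_coe_set_eq,
    Nat.card_congr (Equiv.Set.prod s t), Nat.card_prod]

lemma lq_inter {α : Type*} (K L : Set (List α)) (w : List α) :
    lq (K ∩ L) w = lq K w ∩ lq L w := rfl

-- structural facts about a bifix-free language with ≥ 4 quotients
lemma aux_facts {α : Type*} (M : Set (List α)) (hp : PrefixFree M) (hs : SuffixFree M)
    (hfin : (Set.range (lq M)).Finite) (hc : 4 ≤ (Set.range (lq M)).ncard) :
    (∅ ∈ Set.range (lq M)) ∧ ({([] : List α)} ∈ Set.range (lq M)) ∧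
    M ≠ ∅ ∧ M ≠ {[]} ∧ (∀ w, lq M w = M → w = []) ∧
    (∀ w, w ∈ M → lq M w = {[]}) := by
  have hMne : M ≠ ∅ := by
    rintro rfl
    have h1 : Set.range (lq (∅ : Set (List α))) ⊆ {∅} := by
      rintro _ ⟨w, rfl⟩
      simp [lq, Set.eq_empty_iff_forall_notMem]
    have := Set.ncard_le_ncard h1 (Set.finite_singleton _)
    simp [Set.ncard_singleton] at this
    omega
  have hM1 : M ≠ {[]} := by
    rintro rfl
    have h1 : Set.range (lq ({[]} : Set (List α))) ⊆ {{[]}, ∅} := by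
      rintro _ ⟨w, rfl⟩
      rcases w with _ | ⟨a, t⟩
      · left; rfl
      · right
        ext x
        simp [lq]
    have h2 := Set.ncard_le_ncard h1 ((Set.finite_singleton _).insert _)
    have h3 := Set.ncard_insert_le ({([] : List α)} : Set (List α)) {∅}
    simp [Set.ncard_singleton] at h2 h3
    omega
  obtain ⟨w0, hw0⟩ := Set.nonempty_iff_ne_empty.mpr hMne
  have hw0ne : w0 ≠ [] := by
    rintro rfl
    apply hM1
    ext v
    constructor
    · intro hv
      have := hp [] hw0 v hv List.nil_prefix
      simp [← this]
    · rintro rfl; exact hw0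
  refine ⟨?_, ⟨w0, ?_⟩, hMne, hM1, ?_, ?_⟩
  · -- ∅ is a quotient
    rcases w0 with _ | ⟨a, t⟩
    · exact absurd rfl hw0ne
    refine ⟨(a :: t) ++ [a], ?_⟩
    ext x
    simp only [Set.mem_empty_iff_false, iff_false, lq, Set.mem_setOf_eq]
    intro h
    rw [List.append_assoc] at h
    have := hp _ hw0 _ h ⟨[a] ++ x, rfl⟩
    have := congrArg List.length this
    simp at this
  · -- {[]} is a quotient
    ext x
    simp only [lq, Set.mem_setOf_eq, Set.mem_singleton_iff]
    constructor
    · intro h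
      have := hp _ hw0 _ h ⟨x, rfl⟩
      have := congrArg List.length this
      simpa using this.symm
    · rintro rfl; simpa using hw0
  · -- M is a quotient only at ε
    intro w hw
    have hx : w0 ∈ lq M w := hw.symm ▸ hw0
    have := hs _ hw0 _ hx ⟨w, rfl⟩
    have := congrArg List.length this
    simp at this
    exact this
  · -- quotient at a word of M is {[]}
    intro w hw
    ext x
    simp only [lq, Set.mem_setOf_eq, Set.mem_singleton_iff]
    constructor
    · intro h
      have := hp _ hw _ h ⟨x, rfl⟩
      have := congrArg List.length this
      simpa using this.symm
    · rintro rfl; simpa using hw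

theorem bifixFree_inter_quotient_complexity {α : Type*} (K L : Set (List α)) (m n : ℕ) (hm : 4 ≤ m) (hn : 4 ≤ n)
    (hKp : PrefixFree K) (hKs : SuffixFree K) (hLp : PrefixFree L) (hLs : SuffixFree L)
    (hKfin : (Set.range (lq K)).Finite) (hLfin : (Set.range (lq L)).Finite)
    (hKm : (Set.range (lq K)).ncard = m) (hLn : (Set.range (lq L)).ncard = n) :
    (Set.range (lq (K ∩ L))).Finite ∧
    (Set.range (lq (K ∩ L))).ncard ≤ m * n - 3 * (m + n - 4) := by
  obtain ⟨hK0, hK1, hKne, hKs1, hKonly, hKmem⟩ := aux_facts K hKp hKs hKfin (hKm ▸ hm)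
  obtain ⟨hL0, hL1, hLne, hLs1, hLonly, hLmem⟩ := aux_facts L hLp hLs hLfin (hLn ▸ hn)
  set SK : Set (Set (List α)) := Set.range (lq K) \ {∅, {[]}, K} with hSKdef
  set SL : Set (Set (List α)) := Set.range (lq L) \ {∅, {[]}, L} with hSLdef
  set T : Set (Set (List α)) :=
    insert ∅ (insert {[]} (insert (K ∩ L)
      ((fun p : Set (List α) × Set (List α) => p.1 ∩ p.2) '' (SK ×ˢ SL)))) with hTdef
  have hSKfin : SK.Finite := hKfin.diff
  have hSLfin : SL.Finite := hLfin.diff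
  have hTfin : T.Finite :=
    (((hSKfin.prod hSLfin).image _).insert _).insert _ |>.insert _
  have hsub : Set.range (lq (K ∩ L)) ⊆ T := by
    rintro _ ⟨w, rfl⟩
    rw [lq_inter]
    by_cases hK0' : lq K w = ∅
    · left; rw [hK0', Set.empty_inter]
    by_cases hL0' : lq L w = ∅
    · left; rw [hL0', Set.inter_empty]
    by_cases hK1' : lq K w = {[]}
    · by_cases h : [] ∈ lq L w
      · right; left
        rw [hK1', Set.inter_eq_left.mpr (Set.singleton_subset_iff.mpr h)]
      · left
        rw [hK1']
        ext x
        simp only [Set.mem_inter_iff, Set.mem_singleton_iff, Set.mem_empty_iff_false, iff_false,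
          not_and]
        rintro rfl; exact h
    by_cases hL1' : lq L w = {[]}
    · by_cases h : [] ∈ lq K w
      · right; left
        rw [hL1', Set.inter_eq_right.mpr (Set.singleton_subset_iff.mpr h)]
      · left
        rw [hL1']
        ext x
        simp only [Set.mem_inter_iff, Set.mem_singleton_iff, Set.mem_empty_iff_false, iff_false]
        rintro ⟨hx, rfl⟩; exact h hx
    by_cases hKK : lq K w = K
    · right; right; left
      have : w = [] := hKonly w hKK
      subst this
      rfl
    have hLL : lq L w ≠ L := fun h => hKK (by rw [hLonly w h]; rfl)
    right; right; right
    exact ⟨(lq K w, lq L w), ⟨⟨⟨w, rfl⟩, by simp [hK0', hK1', hKK]⟩,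
      ⟨⟨w, rfl⟩, by simp [hL0', hL1', hLL]⟩⟩, rfl⟩
  refine ⟨hTfin.subset hsub, ?_⟩
  have htriK : ({∅, {[]}, K} : Set (Set (List α))).ncard = 3 := by
    rw [Set.ncard_insert_of_notMem (by simp [Ne.symm hKne, (Set.singleton_ne_empty ([]:List α)).symm]),
      Set.ncard_insert_of_notMem (by simp [Ne.symm hKs1]), Set.ncard_singleton]
  have htriL : ({∅, {[]}, L} : Set (Set (List α))).ncard = 3 := by
    rw [Set.ncard_insert_of_notMem (by simp [Ne.symm hLne, (Set.singleton_ne_empty ([]:List α)).symm]),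
      Set.ncard_insert_of_notMem (by simp [Ne.symm hLs1]), Set.ncard_singleton]
  have htriKsub : ({∅, {[]}, K} : Set (Set (List α))) ⊆ Set.range (lq K) := by
    rintro x (rfl | rfl | rfl)
    exacts [hK0, hK1, ⟨[], rfl⟩]
  have htriLsub : ({∅, {[]}, L} : Set (Set (List α))) ⊆ Set.range (lq L) := by
    rintro x (rfl | rfl | rfl)
    exacts [hL0, hL1, ⟨[], rfl⟩]
  have hSKcard : SK.ncard = m - 3 := by
    rw [hSKdef, Set.ncard_diff htriKsub (Set.Finite.subset hKfin htriKsub), htriK, hKm]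
  have hSLcard : SL.ncard = n - 3 := by
    rw [hSLdef, Set.ncard_diff htriLsub (Set.Finite.subset hLfin htriLsub), htriL, hLn]
  have himg : ((fun p : Set (List α) × Set (List α) => p.1 ∩ p.2) '' (SK ×ˢ SL)).ncard
      ≤ (m - 3) * (n - 3) := by
    calc _ ≤ (SK ×ˢ SL).ncard := Set.ncard_image_le (hSKfin.prod hSLfin)
      _ = (m - 3) * (n - 3) := by rw [ncard_prod', hSKcard, hSLcard]
  have hT : T.ncard ≤ 3 + (m - 3) * (n - 3) := by
    have e1 := Set.ncard_insert_le (K ∩ L)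
      ((fun p : Set (List α) × Set (List α) => p.1 ∩ p.2) '' (SK ×ˢ SL))
    have e2 := Set.ncard_insert_le ({[]} : Set (List α)) (insert (K ∩ L)
      ((fun p : Set (List α) × Set (List α) => p.1 ∩ p.2) '' (SK ×ˢ SL)))
    have e3 := Set.ncard_insert_le (∅ : Set (List α)) (insert {[]} (insert (K ∩ L)
      ((fun p : Set (List α) × Set (List α) => p.1 ∩ p.2) '' (SK ×ˢ SL))))
    rw [hTdef]
    omega
  have hle := Set.ncard_le_ncard hsub hTfin
  have harith : 3 + (m - 3) * (n - 3) ≤ m * n - 3 * (m + n - 4) := by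
    obtain ⟨a, rfl⟩ := Nat.exists_eq_add_of_le hm
    obtain ⟨b, rfl⟩ := Nat.exists_eq_add_of_le hn
    have h1 : (4 + a) * (4 + b) = 16 + 4 * a + 4 * b + a * b := by ring
    have ha : 4 + a - 3 = 1 + a := by omega
    have hb : 4 + b - 3 = 1 + b := by omega
    have h3 : (1 + a) * (1 + b) = 1 + a + b + a * b := by ring
    rw [ha, hb, h1, h3]
    generalize a * b = c
    omega
  omega
end

section
/- If K and L are bifix-free regular languages with m and n quotients respectively, where m, n ≥ 4, then K ∪ L has at most mn − (m + n) distinct quotients. -/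
lemma lq_nil {α : Type*} (K : Set (List α)) : lq K [] = K := by
  ext x; simp [lq]

lemma lq_of_mem {α : Type*} {K : Set (List α)} (hp : PrefixFree K) {w : List α} (hw : w ∈ K) :
    lq K w = {[]} := by
  ext x
  simp only [lq, Set.mem_setOf_eq, Set.mem_singleton_iff]
  constructor
  · intro hx
    have := hp w hw (w ++ x) hx (List.prefix_append w x)
    exact List.self_eq_append_right.1 this
  · rintro rfl; simpa using hw

lemma lq_snoc_of_mem {α : Type*} {K : Set (List α)} (hp : PrefixFree K) {w : List α}
    (hw : w ∈ K) (a : α) : lq K (w ++ [a]) = ∅ := by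
  rw [Set.eq_empty_iff_forall_notMem]
  intro x hx
  have hx' : w ++ ([a] ++ x) ∈ K := by simpa [lq, List.append_assoc] using hx
  have := hp w hw (w ++ ([a] ++ x)) hx' (List.prefix_append _ _)
  have := List.self_eq_append_right.1 this
  simp at this

lemma eq_nil_of_lq_eq {α : Type*} {K : Set (List α)} (hs : SuffixFree K) (hne : K.Nonempty)
    {w : List α} (h : lq K w = K) : w = [] := by
  obtain ⟨u, hu⟩ := hne
  have h1 : w ++ u ∈ K := by
    have : u ∈ lq K w := h.symm ▸ hu
    exact this
  have := hs u hu (w ++ u) h1 (List.suffix_append w u)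
  exact List.self_eq_append_left.1 this

lemma ncard_sprod {A B : Type*} (s : Set A) (t : Set B) :
    (s ×ˢ t).ncard = s.ncard * t.ncard := by
  have := Nat.card_congr (Equiv.Set.prod s t)
  simpa [Nat.card_coe_set_eq, Nat.card_prod] using this

theorem bifixFree_union_quotient_complexity {α : Type*} (K L : Set (List α)) (m n : ℕ) (hm : 4 ≤ m) (hn : 4 ≤ n)
    (hKp : PrefixFree K) (hKs : SuffixFree K) (hLp : PrefixFree L) (hLs : SuffixFree L)
    (hKfin : (Set.range (lq K)).Finite) (hLfin : (Set.range (lq L)).Finite)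
    (hKm : (Set.range (lq K)).ncard = m) (hLn : (Set.range (lq L)).ncard = n) :
    (Set.range (lq (K ∪ L))).Finite ∧
    (Set.range (lq (K ∪ L))).ncard ≤ m * n - (m + n) := by
  classical
  set F := Set.range (lq K) with hF
  set G := Set.range (lq L) with hG
  -- K and L are nonempty
  have nonempt : ∀ (M : Set (List α)), (Set.range (lq M)).ncard ≥ 2 →
      (Set.range (lq M)).Finite → M.Nonempty := by
    intro M hM hMfin
    by_contra h
    rw [Set.not_nonempty_iff_eq_empty] at h
    have hsub : Set.range (lq M) ⊆ {∅} := by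
      rintro s ⟨w, rfl⟩
      have : lq M w = ∅ := by
        rw [Set.eq_empty_iff_forall_notMem]; intro x hx
        simp [lq, h] at hx
      simp [this]
    have := Set.ncard_le_ncard hsub (Set.finite_singleton _)
    simp [Set.ncard_singleton] at this
    omega
  have hKne : K.Nonempty := nonempt K (by rw [← hF]; omega) hKfin
  have hLne : L.Nonempty := nonempt L (by rw [← hG]; omega) hLfin
  -- the alphabet is nonempty
  have hα : Nonempty α := by
    by_contra h
    have hw : ∀ w : List α, w = [] := by
      intro w
      cases w with
      | nil => rfl
      | cons a _ => exact absurd ⟨a⟩ h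
    have hsub : F ⊆ {K} := by
      rintro s ⟨w, rfl⟩
      rw [hw w, lq_nil]
      rfl
    have := Set.ncard_le_ncard hsub (Set.finite_singleton _)
    simp [Set.ncard_singleton] at this
    omega
  obtain ⟨a⟩ := hα
  -- K ≠ {[]} and L ≠ {[]}
  have ne_single : ∀ (M : Set (List α)), (Set.range (lq M)).ncard ≥ 3 →
      (Set.range (lq M)).Finite → M ≠ {[]} := by
    intro M hM hMfin h
    have hsub : Set.range (lq M) ⊆ {∅, {[]}} := by
      rintro s ⟨w, rfl⟩
      cases w with
      | nil => right; rw [lq_nil, h]; rfl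
      | cons b w =>
        left
        show lq M (b :: w) = ∅
        rw [Set.eq_empty_iff_forall_notMem]
        intro x hx
        have : b :: w ++ x ∈ M := hx
        rw [h] at this
        simp at this
    have h2 : ({∅, {[]}} : Set (Set (List α))).ncard ≤ 2 := by
      have := Set.ncard_insert_le (∅ : Set (List α)) {({[]} : Set (List α))}
      simpa [Set.ncard_singleton] using this
    have := Set.ncard_le_ncard hsub (by
      exact (Set.finite_singleton _).insert _)
    omega
  have hKsing : K ≠ {[]} := ne_single K (by rw [← hF]; omega) hKfin
  have hLsing : L ≠ {[]} := ne_single L (by rw [← hG]; omega) hLfin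
  have hKemp : K ≠ ∅ := hKne.ne_empty
  have hLemp : L ≠ ∅ := hLne.ne_empty
  -- membership facts
  obtain ⟨u, hu⟩ := hKne
  obtain ⟨v, hv⟩ := hLne
  have hKF : K ∈ F := ⟨[], lq_nil K⟩
  have hLG : L ∈ G := ⟨[], lq_nil L⟩
  have hεF : ({[]} : Set (List α)) ∈ F := ⟨u, lq_of_mem hKp hu⟩
  have hεG : ({[]} : Set (List α)) ∈ G := ⟨v, lq_of_mem hLp hv⟩
  have hemptyF : (∅ : Set (List α)) ∈ F := ⟨u ++ [a], lq_snoc_of_mem hKp hu a⟩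
  have hemptyG : (∅ : Set (List α)) ∈ G := ⟨v ++ [a], lq_snoc_of_mem hLp hv a⟩
  -- the three collapsing pairs
  set T : Set (Set (List α) × Set (List α)) :=
    {({[]}, ∅), (∅, {[]}), ({[]}, {[]})} with hT
  set S : Set (Set (List α) × Set (List α)) :=
    ((F \ {K}) ×ˢ (G \ {L})) \ T with hS
  have huni : ∀ w : List α, lq (K ∪ L) w = lq K w ∪ lq L w := by
    intro w; ext x; simp [lq, Set.mem_union]
  -- the key inclusion
  have hsub : Set.range (lq (K ∪ L)) ⊆
      (fun p : Set (List α) × Set (List α) => p.1 ∪ p.2) '' S ∪ {K ∪ L, {[]}} := by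
    rintro s ⟨w, rfl⟩
    rcases eq_or_ne w [] with rfl | hw
    · right; left; rw [lq_nil]
    · have hK' : lq K w ≠ K := fun h => hw (eq_nil_of_lq_eq hKs ⟨u, hu⟩ h)
      have hL' : lq L w ≠ L := fun h => hw (eq_nil_of_lq_eq hLs ⟨v, hv⟩ h)
      have hp : (lq K w, lq L w) ∈ (F \ {K}) ×ˢ (G \ {L}) :=
        ⟨⟨⟨w, rfl⟩, hK'⟩, ⟨⟨w, rfl⟩, hL'⟩⟩
      by_cases hTmem : (lq K w, lq L w) ∈ T
      · right; right
        have : lq K w ∪ lq L w = {[]} := by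
          simp only [hT, Set.mem_insert_iff, Set.mem_singleton_iff, Prod.mk.injEq] at hTmem
          rcases hTmem with ⟨h1, h2⟩ | ⟨h1, h2⟩ | ⟨h1, h2⟩ <;> rw [h1, h2] <;> simp
        show lq (K ∪ L) w ∈ {({[]} : Set (List α))}
        rw [huni w, this]
        rfl
      · left
        exact ⟨(lq K w, lq L w), ⟨hp, hTmem⟩, (huni w).symm⟩
  -- finiteness
  have hprodfin : ((F \ {K}) ×ˢ (G \ {L})).Finite :=
    (hKfin.diff).prod (hLfin.diff)
  have hSfin : S.Finite := hprodfin.diff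
  have hbigfin : ((fun p : Set (List α) × Set (List α) => p.1 ∪ p.2) '' S ∪
      {K ∪ L, {[]}}).Finite :=
    (hSfin.image _).union ((Set.finite_singleton _).insert _)
  have hfin : (Set.range (lq (K ∪ L))).Finite := hbigfin.subset hsub
  refine ⟨hfin, ?_⟩
  -- cardinality of T
  have hεne : ({[]} : Set (List α)) ≠ ∅ := Set.singleton_ne_empty _
  have hT3 : T.ncard = 3 := by
    rw [hT]
    rw [Set.ncard_insert_of_notMem (by
      simp only [Set.mem_insert_iff, Set.mem_singleton_iff, Prod.mk.injEq, not_or]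
      exact ⟨fun h => hεne h.1, fun h => hεne h.2.symm⟩)
      ((Set.finite_singleton _).insert _)]
    rw [Set.ncard_insert_of_notMem (by
      simp only [Set.mem_singleton_iff, Prod.mk.injEq, not_and]
      intro h; exact absurd h.symm hεne) (Set.finite_singleton _)]
    simp [Set.ncard_singleton]
  have hTsub : T ⊆ (F \ {K}) ×ˢ (G \ {L}) := by
    intro p hp
    simp only [hT, Set.mem_insert_iff, Set.mem_singleton_iff] at hp
    rcases hp with rfl | rfl | rfl
    · exact ⟨⟨hεF, fun h => hKsing (Set.mem_singleton_iff.1 h).symm⟩,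
        ⟨hemptyG, fun h => hLemp (Set.mem_singleton_iff.1 h).symm⟩⟩
    · exact ⟨⟨hemptyF, fun h => hKemp (Set.mem_singleton_iff.1 h).symm⟩,
        ⟨hεG, fun h => hLsing (Set.mem_singleton_iff.1 h).symm⟩⟩
    · exact ⟨⟨hεF, fun h => hKsing (Set.mem_singleton_iff.1 h).symm⟩,
        ⟨hεG, fun h => hLsing (Set.mem_singleton_iff.1 h).symm⟩⟩
  -- cardinalities
  have hFcard : (F \ {K}).ncard = m - 1 := by
    rw [Set.ncard_diff_singleton_of_mem hKF, hKm]
  have hGcard : (G \ {L}).ncard = n - 1 := by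
    rw [Set.ncard_diff_singleton_of_mem hLG, hLn]
  have hprodcard : ((F \ {K}) ×ˢ (G \ {L})).ncard = (m - 1) * (n - 1) := by
    rw [ncard_sprod, hFcard, hGcard]
  have hScard : S.ncard = (m - 1) * (n - 1) - 3 := by
    rw [hS, Set.ncard_diff hTsub (by
      exact ((Set.finite_singleton _).insert _).insert _), hprodcard, hT3]
  have hpair : ({K ∪ L, ({[]} : Set (List α))} : Set (Set (List α))).ncard ≤ 2 := by
    have := Set.ncard_insert_le (K ∪ L) {({[]} : Set (List α))}
    simpa [Set.ncard_singleton] using this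
  have hchain : (Set.range (lq (K ∪ L))).ncard ≤ (m - 1) * (n - 1) - 3 + 2 := by
    calc (Set.range (lq (K ∪ L))).ncard
        ≤ ((fun p : Set (List α) × Set (List α) => p.1 ∪ p.2) '' S ∪
            {K ∪ L, {[]}}).ncard := Set.ncard_le_ncard hsub hbigfin
      _ ≤ ((fun p : Set (List α) × Set (List α) => p.1 ∪ p.2) '' S).ncard +
            ({K ∪ L, ({[]} : Set (List α))} : Set (Set (List α))).ncard :=
          Set.ncard_union_le _ _
      _ ≤ S.ncard + 2 := Nat.add_le_add (Set.ncard_image_le hSfin) hpair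
      _ = (m - 1) * (n - 1) - 3 + 2 := by rw [hScard]
  refine hchain.trans ?_
  obtain ⟨b, rfl⟩ : ∃ b, m = b + 4 := ⟨m - 4, by omega⟩
  obtain ⟨c, rfl⟩ : ∃ c, n = c + 4 := ⟨n - 4, by omega⟩
  have e0 : b + 4 - 1 = b + 3 := by omega
  have e0' : c + 4 - 1 = c + 3 := by omega
  rw [e0, e0']
  have e1 : (b + 3) * (c + 3) = b * c + 3 * b + 3 * c + 9 := by ring
  have e2 : (b + 4) * (c + 4) = b * c + 4 * b + 4 * c + 16 := by ring
  rw [e1, e2]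
  generalize b * c = d
  omega
end

section
/- If L is a bifix-free regular language with n quotients, n ≥ 3, then its Kleene star L* has at most n − 1 distinct quotients. -/
def star {α : Type*} (L : Set (List α)) : Set (List α) :=
  {w | ∃ l : List (List α), (∀ u ∈ l, u ∈ L) ∧ w = l.flatten}

namespace BFaux

variable {α : Type*} {L : Set (List α)}

lemma star_nil : ([] : List α) ∈ star L := ⟨[], by simp, rfl⟩

lemma star_cons {b w : List α} (hb : b ∈ L) (hw : w ∈ star L) : b ++ w ∈ star L := by
  obtain ⟨l, hl, rfl⟩ := hw
  exact ⟨b :: l, by simpa using ⟨hb, hl⟩, by simp⟩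

lemma first_block {w : List α} (hw : w ∈ star L) (hne : w ≠ []) :
    ∃ c ∈ L, ∃ r ∈ star L, w = c ++ r := by
  obtain ⟨l, hl, rfl⟩ := hw
  cases l with
  | nil => simp at hne
  | cons c l' =>
      exact ⟨c, hl c (by simp), l'.flatten,
        ⟨l', fun u hu => hl u (by simp [hu]), rfl⟩, by simp⟩

lemma cancel (hp : PrefixFree L) {b t : List α} (hb : b ∈ L) (h : b ++ t ∈ star L)
    (hbne : b ≠ []) : t ∈ star L := by
  obtain ⟨c, hc, r, hr, hcr⟩ := first_block h (by simp [hbne])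
  have h1 : b <+: b ++ t := List.prefix_append _ _
  have h2 : c <+: b ++ t := hcr ▸ List.prefix_append _ _
  have hbc : b = c := by
    rcases List.prefix_or_prefix_of_prefix h1 h2 with h' | h'
    · exact hp b hb c hc h'
    · exact (hp c hc b hb h').symm
  subst hbc
  have : t = r := by
    have := hcr
    simpa using this
  exact this ▸ hr

/-- Classification of the quotients of `star L` for prefix-free `L` not containing `[]`. -/
lemma star_quot (hp : PrefixFree L) (hε : ([] : List α) ∉ L) :
    ∀ N (w : List α), w.length ≤ N →
      lq (star L) w = star L ∨
      ∃ r : List α, r ≠ [] ∧ (¬ ∃ p ∈ L, p <+: r) ∧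
        lq (star L) w = {x | ∃ a ∈ lq L r, ∃ b ∈ star L, x = a ++ b} := by
  intro N
  induction N with
  | zero =>
      intro w hw
      have : w = [] := List.length_eq_zero_iff.mp (Nat.le_zero.mp hw)
      subst this
      left; ext x; simp [lq]
  | succ N ih =>
      intro w hw
      by_cases hwnil : w = []
      · subst hwnil; left; ext x; simp [lq]
      by_cases hpre : ∃ p ∈ L, p <+: w
      · -- strip a block from the front
        obtain ⟨p, hpL, w', rfl⟩ := hpre
        have hpne : p ≠ [] := fun h => hε (h ▸ hpL)
        have hlen : w'.length ≤ N := by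
          have : 0 < p.length := List.length_pos_iff.mpr hpne
          have := hw
          simp only [List.length_append] at this
          omega
        have heq : lq (star L) (p ++ w') = lq (star L) w' := by
          ext x
          constructor
          · intro hx
            have : p ++ (w' ++ x) ∈ star L := by simpa [lq] using hx
            exact cancel hp hpL this hpne
          · intro hx
            have : p ++ (w' ++ x) ∈ star L := star_cons hpL hx
            simpa [lq] using this
        rcases ih w' hlen with h | ⟨r, hr1, hr2, hr3⟩
        · left; rw [heq, h]
        · right; exact ⟨r, hr1, hr2, heq ▸ hr3⟩
      · -- w has no prefix in L
        right
        refine ⟨w, hwnil, hpre, ?_⟩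
        ext x
        simp only [lq, Set.mem_setOf_eq]
        constructor
        · intro hx
          have hne : w ++ x ≠ [] := by simp [hwnil]
          obtain ⟨c, hc, r, hr, hcr⟩ := first_block hx hne
          have h1 : w <+: w ++ x := List.prefix_append _ _
          have h2 : c <+: w ++ x := hcr ▸ List.prefix_append _ _
          rcases List.prefix_or_prefix_of_prefix h2 h1 with h' | h'
          · exact absurd ⟨c, hc, h'⟩ hpre
          · obtain ⟨a, rfl⟩ := h'
            refine ⟨a, by simpa [lq] using hc, r, hr, ?_⟩
            have := hcr
            rw [List.append_assoc] at this
            exact (List.append_cancel_left this)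
        · rintro ⟨a, ha, b, hb, rfl⟩
          have : (w ++ a) ++ b ∈ star L := star_cons (by simpa [lq] using ha) hb
          simpa using this

end BFaux

theorem bifixFree_star_quotient_complexity {α : Type*} (L : Set (List α)) (n : ℕ)
    (hn : 3 ≤ n) (hLp : PrefixFree L) (hLs : SuffixFree L)
    (hLfin : (Set.range (lq L)).Finite) (hLn : (Set.range (lq L)).ncard = n) :
    (Set.range (lq (star L))).Finite ∧ (Set.range (lq (star L))).ncard ≤ n - 1 := by
  classical
  -- `[] ∉ L`
  have hε : ([] : List α) ∉ L := by
    intro h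
    have hLeq : L = {([] : List α)} := by
      apply Set.eq_singleton_iff_unique_mem.mpr
      exact ⟨h, fun v hv => (hLp [] h v hv List.nil_prefix).symm⟩
    have hsub : Set.range (lq L) ⊆ {({([] : List α)} : Set (List α)), (∅ : Set (List α))} := by
      rintro _ ⟨w, rfl⟩
      by_cases hw : w = []
      · left; subst hw; ext x; simp [lq, hLeq]
      · right; ext x; simp only [lq, hLeq, Set.mem_setOf_eq]
        simp [Set.mem_singleton_iff, hw]
    have : (Set.range (lq L)).ncard ≤ 2 := by
      calc (Set.range (lq L)).ncard ≤
          ({({([] : List α)} : Set (List α)), (∅ : Set (List α))} : Set (Set (List α))).ncard :=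
            Set.ncard_le_ncard hsub ((Set.finite_singleton _).insert _)
        _ ≤ 2 := (Set.ncard_insert_le _ _).trans (by simp)
    omega
  -- `L` is nonempty
  have hLne : L.Nonempty := by
    by_contra hcon
    rw [Set.not_nonempty_iff_eq_empty] at hcon
    have hsub : Set.range (lq L) ⊆ {(∅ : Set (List α))} := by
      rintro _ ⟨w, rfl⟩
      simp [lq, hcon]
    have : (Set.range (lq L)).ncard ≤ 1 := by
      calc (Set.range (lq L)).ncard ≤ ({(∅ : Set (List α))} : Set (Set (List α))).ncard :=
            Set.ncard_le_ncard hsub (Set.finite_singleton _)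
        _ = 1 := Set.ncard_singleton _
    omega
  obtain ⟨u, hu⟩ := hLne
  have hune : u ≠ [] := fun h => hε (h ▸ hu)
  -- the two excluded quotients
  have hLrange : L ∈ Set.range (lq L) := ⟨[], by ext x; simp [lq]⟩
  have hurange : lq L u ∈ Set.range (lq L) := ⟨u, rfl⟩
  have hLu_ne : L ≠ lq L u := by
    intro h
    have : ([] : List α) ∈ lq L u := by simp [lq, hu]
    rw [← h] at this
    exact hε this
  set f : Set (List α) → Set (List α) :=
    fun Q => {x | ∃ a ∈ Q, ∃ b ∈ star L, x = a ++ b} with hf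
  set D : Set (Set (List α)) := Set.range (lq L) \ {L, lq L u} with hD
  set C : Set (Set (List α)) := insert (star L) (f '' D) with hC
  have hDfin : D.Finite := hLfin.diff
  have hCfin : C.Finite := (hDfin.image f).insert _
  have hsub : Set.range (lq (star L)) ⊆ C := by
    rintro _ ⟨w, rfl⟩
    rcases BFaux.star_quot hLp hε w.length w le_rfl with h | ⟨r, hr1, hr2, hr3⟩
    · rw [h]; exact Set.mem_insert _ _
    · right
      refine ⟨lq L r, ⟨⟨r, rfl⟩, ?_⟩, hr3.symm⟩
      simp only [Set.mem_insert_iff, Set.mem_singleton_iff, not_or]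
      constructor
      · -- lq L r ≠ L  (suffix-freeness)
        intro h
        have hru : r ++ u ∈ L := by
          have : u ∈ lq L r := by rw [h]; exact hu
          simpa [lq] using this
        have heq := hLs u hu (r ++ u) hru (List.suffix_append r u)
        have hlen := congrArg List.length heq
        simp at hlen
        exact hr1 hlen
      · -- lq L r ≠ lq L u  (ε-membership)
        intro h
        have : ([] : List α) ∈ lq L r := by rw [h]; simp [lq, hu]
        have hrL : r ∈ L := by simpa [lq] using this
        exact hr2 ⟨r, hrL, List.prefix_refl r⟩
  have hfin : (Set.range (lq (star L))).Finite := hCfin.subset hsub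
  refine ⟨hfin, ?_⟩
  have hpair : ({L, lq L u} : Set (Set (List α))) ⊆ Set.range (lq L) := by
    rintro Q hQ
    rcases hQ with h | h
    · exact h ▸ hLrange
    · exact h ▸ hurange
  have hDcard : D.ncard = n - 2 := by
    rw [hD, Set.ncard_diff hpair (Set.toFinite _), hLn, Set.ncard_pair hLu_ne]
  calc (Set.range (lq (star L))).ncard ≤ C.ncard := Set.ncard_le_ncard hsub hCfin
    _ ≤ (f '' D).ncard + 1 := Set.ncard_insert_le _ _
    _ ≤ D.ncard + 1 := by
        have := Set.ncard_image_le (f := f) (s := D) hDfin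
        omega
    _ ≤ n - 1 := by omega
end

section
/- For n ≥ 3, the Kleene star of the subword-free language {a^{n−2}} over the alphabet {a, b} has exactly n − 1 distinct quotients, namely the n − 2 languages a^{n−2−i}(a^{n−2})* for i = 1, …, n − 2, together with the empty language. -/
namespace StarAux

/-- canonical index associated to a prefix length -/
def iv (m j : ℕ) : ℕ := if j % m = 0 then m else j % m

def Qset (m i : ℕ) : Set (List Bool) :=
  {x | ∃ y ∈ star ({List.replicate m true} : Set (List Bool)),
      x = List.replicate (m - i) true ++ y}

lemma iv_ge_one {m j : ℕ} (hm : 1 ≤ m) : 1 ≤ iv m j := by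
  unfold iv; split <;> omega

lemma iv_le {m j : ℕ} (hm : 1 ≤ m) : iv m j ≤ m := by
  unfold iv; split
  · exact le_rfl
  · exact le_of_lt (Nat.mod_lt _ hm)

lemma iv_self {m i : ℕ} (h1 : 1 ≤ i) (h2 : i ≤ m) : iv m i = i := by
  unfold iv
  rcases eq_or_lt_of_le h2 with rfl | h
  · simp [Nat.mod_self]
  · rw [Nat.mod_eq_of_lt h, if_neg (by omega)]

lemma mem_starS {m : ℕ} {w : List Bool} :
    w ∈ star ({List.replicate m true} : Set (List Bool)) ↔
      ∃ s, m ∣ s ∧ w = List.replicate s true := by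
  constructor
  · rintro ⟨l, hl, rfl⟩
    induction l with
    | nil => exact ⟨0, dvd_zero m, rfl⟩
    | cons u t ih =>
      obtain ⟨s, hs, ht⟩ := ih (fun u hu => hl u (List.mem_cons_of_mem _ hu))
      have hu : u = List.replicate m true := hl u (List.mem_cons_self)
      refine ⟨m + s, dvd_add dvd_rfl hs, ?_⟩
      rw [List.flatten_cons, hu, ht, List.replicate_add]
  · rintro ⟨s, ⟨k, rfl⟩, rfl⟩
    refine ⟨List.replicate k (List.replicate m true),
      fun u hu => List.eq_of_mem_replicate hu, ?_⟩
    induction k with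
    | zero => simp
    | succ k ih =>
      rw [List.replicate_succ, List.flatten_cons, ← ih,
        show m * (k + 1) = m + m * k by ring, List.replicate_add]

lemma lq_of_false {m : ℕ} {w : List Bool} (hw : false ∈ w) :
    lq (star ({List.replicate m true} : Set (List Bool))) w = ∅ := by
  ext x
  simp only [lq, Set.mem_setOf_eq, Set.mem_empty_iff_false, iff_false]
  intro h
  rw [mem_starS] at h
  obtain ⟨s, -, heq⟩ := h
  have : false ∈ List.replicate s true := heq ▸ List.mem_append_left _ hw
  simpa using List.eq_of_mem_replicate this

lemma lq_replicate {m j : ℕ} :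
    lq (star ({List.replicate m true} : Set (List Bool))) (List.replicate j true) =
      {x | ∃ d, m ∣ (j + d) ∧ x = List.replicate d true} := by
  ext x
  simp only [lq, Set.mem_setOf_eq]
  rw [mem_starS]
  constructor
  · rintro ⟨s, hs, heq⟩
    have hlen : j + x.length = s := by
      have := congrArg List.length heq; simpa using this
    have hx : x = List.replicate (s - j) true := by
      have h2 := congrArg (List.drop j) heq
      rwa [List.drop_left' (by simp), List.drop_replicate] at h2
    refine ⟨s - j, ?_, hx⟩
    have hxl : x.length = s - j := by rw [hx]; simp
    rwa [show j + (s - j) = s by omega]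
  · rintro ⟨d, hd, rfl⟩
    exact ⟨j + d, hd, (List.replicate_add j d true).symm⟩

lemma mem_Qset {m i : ℕ} {x : List Bool} :
    x ∈ Qset m i ↔ ∃ d, m - i ≤ d ∧ m ∣ (d - (m - i)) ∧ x = List.replicate d true := by
  constructor
  · rintro ⟨y, hy, rfl⟩
    rw [mem_starS] at hy
    obtain ⟨s, hs, rfl⟩ := hy
    refine ⟨m - i + s, Nat.le_add_right _ _, ?_, (List.replicate_add _ _ _).symm⟩
    simpa using hs
  · rintro ⟨d, hle, hdvd, rfl⟩
    refine ⟨List.replicate (d - (m - i)) true, mem_starS.2 ⟨_, hdvd, rfl⟩, ?_⟩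
    rw [← List.replicate_add]
    congr 1
    omega

lemma arith {m j d : ℕ} (hm : 1 ≤ m) :
    m ∣ (j + d) ↔ (m - iv m j ≤ d ∧ m ∣ (d - (m - iv m j))) := by
  unfold iv
  by_cases h : j % m = 0
  · simp only [h, if_pos, Nat.sub_self, Nat.zero_le, true_and, Nat.sub_zero]
    exact Nat.dvd_add_right (Nat.dvd_of_mod_eq_zero h)
  · rw [if_neg h]
    have hr1 : 1 ≤ j % m := Nat.one_le_iff_ne_zero.2 h
    have hr2 : j % m < m := Nat.mod_lt _ hm
    constructor
    · intro hdvd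
      have h0 : (j + d) % m = 0 := Nat.dvd_iff_mod_eq_zero.1 hdvd
      have h2 : (j % m + d) % m = 0 := by rw [Nat.mod_add_mod]; exact h0
      have hdvd' : m ∣ j % m + d := Nat.dvd_of_mod_eq_zero h2
      have hge : m ≤ j % m + d := Nat.le_of_dvd (by omega) hdvd'
      refine ⟨by omega, ?_⟩
      have h3 := Nat.dvd_sub hdvd' (dvd_refl m)
      rwa [show j % m + d - m = d - (m - j % m) by omega] at h3
    · rintro ⟨hle, hdvd2⟩
      have key : j % m + d = m + (d - (m - j % m)) := by omega
      have h4 : m ∣ j % m + d := key ▸ dvd_add dvd_rfl hdvd2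
      have h5 : (j + d) % m = 0 := by
        rw [← Nat.mod_add_mod]
        exact Nat.dvd_iff_mod_eq_zero.1 h4
      exact Nat.dvd_of_mod_eq_zero h5

end StarAux

open StarAux in
theorem star_of_unary_subwordFree_quotients (n : ℕ) (hn : 3 ≤ n) :
    Set.range (lq (star ({List.replicate (n - 2) true} : Set (List Bool)))) =
      {Q : Set (List Bool) |
        (∃ i, 1 ≤ i ∧ i ≤ n - 2 ∧
          Q = {x | ∃ y ∈ star ({List.replicate (n - 2) true} : Set (List Bool)),
                x = List.replicate (n - 2 - i) true ++ y}) ∨ Q = ∅} ∧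
    (Set.range (lq (star ({List.replicate (n - 2) true} : Set (List Bool))))).ncard
      = n - 1 := by
  have hm : 1 ≤ n - 2 := by omega
  set m := n - 2 with hmdef
  -- lq at any all-true replicate is a Qset
  have lqrep : ∀ j, lq (star ({List.replicate m true} : Set (List Bool)))
      (List.replicate j true) = Qset m (iv m j) := by
    intro j
    ext x
    rw [lq_replicate, Set.mem_setOf_eq, mem_Qset]
    constructor
    · rintro ⟨d, hd, rfl⟩
      obtain ⟨h1, h2⟩ := (arith hm).1 hd
      exact ⟨d, h1, h2, rfl⟩
    · rintro ⟨d, h1, h2, rfl⟩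
      exact ⟨d, (arith hm).2 ⟨h1, h2⟩, rfl⟩
  have repmem : ∀ i, List.replicate (m - i) true ∈ Qset m i := fun i =>
    mem_Qset.2 ⟨m - i, le_rfl, by simp, rfl⟩
  have hrange : Set.range (lq (star ({List.replicate m true} : Set (List Bool)))) =
      Qset m '' Set.Icc 1 m ∪ {∅} := by
    ext Q
    simp only [Set.mem_range, Set.mem_union, Set.mem_image, Set.mem_Icc,
      Set.mem_singleton_iff]
    constructor
    · rintro ⟨w, rfl⟩
      by_cases hf : false ∈ w
      · right; exact lq_of_false hf
      · left
        have hw : w = List.replicate w.length true := by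
          rw [List.eq_replicate_iff]
          refine ⟨rfl, fun b hb => ?_⟩
          cases b
          · exact absurd hb hf
          · rfl
        refine ⟨iv m w.length, ⟨iv_ge_one hm, iv_le hm⟩, ?_⟩
        have h := lqrep w.length
        rw [← hw] at h
        exact h.symm
    · rintro (⟨i, ⟨hi1, hi2⟩, rfl⟩ | rfl)
      · exact ⟨List.replicate i true, by rw [lqrep i, iv_self hi1 hi2]⟩
      · exact ⟨[false], lq_of_false (by simp)⟩
  have hinj : Set.InjOn (Qset m) (Set.Icc 1 m) := by
    intro i hi j hj hij
    simp only [Set.mem_Icc] at hi hj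
    have h1 : List.replicate (m - i) true ∈ Qset m j := hij ▸ repmem i
    have h2 : List.replicate (m - j) true ∈ Qset m i := hij.symm ▸ repmem j
    rw [mem_Qset] at h1 h2
    obtain ⟨d1, hle1, -, he1⟩ := h1
    obtain ⟨d2, hle2, -, he2⟩ := h2
    have hd1 : m - i = d1 := by have := congrArg List.length he1; simpa using this
    have hd2 : m - j = d2 := by have := congrArg List.length he2; simpa using this
    omega
  have hempty : (∅ : Set (List Bool)) ∉ Qset m '' Set.Icc 1 m := by
    rintro ⟨i, -, h⟩
    exact (h ▸ repmem i : (List.replicate (m - i) true) ∈ (∅ : Set (List Bool)))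
  constructor
  · rw [hrange]
    ext Q
    simp only [Set.mem_union, Set.mem_image, Set.mem_Icc, Set.mem_singleton_iff,
      Set.mem_setOf_eq, Qset]
    constructor
    · rintro (⟨i, ⟨h1, h2⟩, rfl⟩ | rfl)
      · exact Or.inl ⟨i, h1, h2, rfl⟩
      · exact Or.inr rfl
    · rintro (⟨i, h1, h2, rfl⟩ | rfl)
      · exact Or.inl ⟨i, ⟨h1, h2⟩, rfl⟩
      · exact Or.inr rfl
  · rw [hrange, Set.union_singleton,
      Set.ncard_insert_of_notMem hempty ((Set.finite_Icc 1 m).image _),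
      Set.ncard_image_of_injOn hinj, ← Finset.coe_Icc, Set.ncard_coe_finset,
      Nat.card_Icc]
    omega
end

section
/- If L is a bifix-free regular language with n quotients, n ≥ 3, then the reversal L^R has at most 2^{n−3} + 2 distinct quotients. -/
def rev {α : Type*} (L : Set (List α)) : Set (List α) := (fun w => w.reverse) '' L

lemma ncard_powerset_le {β : Type*} (s : Set β) (hs : s.Finite) :
    (𝒫 s).ncard ≤ 2 ^ s.ncard := by
  have hsub : 𝒫 s ⊆ (fun t : Finset β => (t : Set β)) '' ↑hs.toFinset.powerset := by
    intro t ht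
    have htfin : t.Finite := hs.subset ht
    refine ⟨htfin.toFinset, ?_, by simp⟩
    simp only [Finset.coe_powerset, Set.mem_preimage, Set.mem_powerset_iff,
      Finset.coe_subset]
    simpa using ht
  calc (𝒫 s).ncard ≤ ((fun t : Finset β => (t : Set β)) '' ↑hs.toFinset.powerset).ncard :=
        Set.ncard_le_ncard hsub ((hs.toFinset.powerset.finite_toSet).image _)
    _ ≤ (↑hs.toFinset.powerset : Set (Finset β)).ncard :=
        Set.ncard_image_le (hs.toFinset.powerset.finite_toSet)
    _ = hs.toFinset.powerset.card := Set.ncard_coe_finset _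
    _ = 2 ^ s.ncard := by rw [Finset.card_powerset, Set.ncard_eq_toFinset_card _ hs]

theorem bifixFree_reversal_quotient_complexity {α : Type*} (L : Set (List α)) (n : ℕ)
    (hn : 3 ≤ n) (hLp : PrefixFree L) (hLs : SuffixFree L)
    (hLfin : (Set.range (lq L)).Finite) (hLn : (Set.range (lq L)).ncard = n) :
    (Set.range (lq (rev L))).Finite ∧
      (Set.range (lq (rev L))).ncard ≤ 2 ^ (n - 3) + 2 := by
  classical
  set Q := Set.range (lq L) with hQdef
  -- L is nonempty
  have hLne : L ≠ ∅ := by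
    intro h
    have hq : Q = {∅} := by
      ext q
      simp only [hQdef, Set.mem_range, Set.mem_singleton_iff]
      constructor
      · rintro ⟨w, rfl⟩; ext x; simp [lq, h]
      · rintro rfl; exact ⟨[], by ext x; simp [lq, h]⟩
    rw [hq, Set.ncard_singleton] at hLn
    omega
  obtain ⟨w₀, hw₀⟩ := Set.nonempty_iff_ne_empty.2 hLne
  -- L ≠ {[]}
  have hLsing : L ≠ {[]} := by
    intro h
    have hq : Q ⊆ {{[]}, ∅} := by
      rintro q ⟨w, rfl⟩
      rcases eq_or_ne w [] with rfl | hw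
      · left; ext x; simp [lq, h]
      · right; ext x; simp only [lq, h, Set.mem_setOf_eq, Set.mem_singleton_iff,
          Set.mem_empty_iff_false, iff_false]
        intro hx
        exact hw (List.append_eq_nil_iff.1 hx).1
    have := Set.ncard_le_ncard hq ((Set.finite_singleton _).insert _)
    have h2 : ({{[]}, ∅} : Set (Set (List α))).ncard ≤ 2 := by
      refine le_trans (Set.ncard_insert_le _ _) ?_
      simp [Set.ncard_singleton]
    omega
  -- [] ∉ L
  have hεL : [] ∉ L := by
    intro h
    apply hLsing
    ext v
    simp only [Set.mem_singleton_iff]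
    exact ⟨fun hv => (hLp [] h v hv (List.nil_prefix)).symm, fun hv => hv ▸ h⟩
  have hw₀ne : w₀ ≠ [] := fun h => hεL (h ▸ hw₀)
  -- lq L [] = L
  have hlq0 : lq L [] = L := by ext x; simp [lq]
  -- lq L w₀ = {[]}
  have hlqw₀ : lq L w₀ = {[]} := by
    ext x
    simp only [lq, Set.mem_setOf_eq, Set.mem_singleton_iff]
    constructor
    · intro hx
      have := hLp w₀ hw₀ (w₀ ++ x) hx ⟨x, rfl⟩
      have : w₀ ++ x = w₀ ++ [] := by simpa using this.symm
      exact List.append_cancel_left this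
    · rintro rfl; simpa using hw₀
  -- the dead quotient ∅ ∈ Q
  obtain ⟨a, t, rfl⟩ : ∃ a t, w₀ = a :: t := by
    cases w₀ with
    | nil => exact absurd rfl hw₀ne
    | cons a t => exact ⟨a, t, rfl⟩
  set w₀ : List α := a :: t with hw₀def
  have hdead : lq L (w₀ ++ [a]) = ∅ := by
    ext x
    simp only [lq, Set.mem_setOf_eq, Set.mem_empty_iff_false, iff_false]
    intro hx
    have := hLp w₀ hw₀ (w₀ ++ [a] ++ x) (by simpa using hx) ⟨[a] ++ x, by simp⟩
    have hlen := congrArg List.length this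
    simp at hlen
  have hLQ : L ∈ Q := ⟨[], hlq0⟩
  have hεQ : ({[]} : Set (List α)) ∈ Q := ⟨w₀, hlqw₀⟩
  have hEQ : (∅ : Set (List α)) ∈ Q := ⟨w₀ ++ [a], hdead⟩
  have hLεne : L ≠ {[]} := hLsing
  have hLneq : L ≠ ∅ := hLne
  have hEneq : ({[]} : Set (List α)) ≠ ∅ := by
    intro h; exact absurd (h ▸ rfl : [] ∈ (∅ : Set (List α))) (by simp)
  -- the key maps
  set Q' : Set (Set (List α)) := Q \ {L, {[]}, ∅} with hQ'def
  set F : List α → Set (Set (List α)) := fun u => {q | q ∈ Q ∧ u ∈ q} with hFdef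
  set G : Set (Set (List α)) → Set (List α) := fun S => {x | lq L x.reverse ∈ S} with hGdef
  have key : ∀ w, lq (rev L) w = G (F w.reverse) := by
    intro w
    ext x
    simp only [lq, rev, Set.mem_setOf_eq, Set.mem_image, hGdef, hFdef]
    constructor
    · rintro ⟨y, hy, hyr⟩
      have hy' : y = x.reverse ++ w.reverse := by
        rw [← List.reverse_reverse y, hyr]; simp
      subst hy'
      exact ⟨⟨x.reverse, rfl⟩, hy⟩
    · rintro ⟨-, hx⟩
      exact ⟨x.reverse ++ w.reverse, hx, by simp⟩
  -- case analysis on F u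
  have caseA : ∀ u ∈ L, F u = {L} := by
    intro u hu
    ext q
    simp only [hFdef, Set.mem_setOf_eq, Set.mem_singleton_iff]
    constructor
    · rintro ⟨⟨w, rfl⟩, huq⟩
      have := hLs u hu (w ++ u) huq ⟨w, rfl⟩
      have hw : w = [] := by
        have : w ++ u = [] ++ u := by simpa using this.symm
        exact List.append_cancel_right this
      rw [hw, hlq0]
    · rintro rfl
      exact ⟨hlq0 ▸ ⟨[], rfl⟩, hu⟩
  have caseC : ∀ u, u ≠ [] → u ∉ L → F u ⊆ Q' := by
    intro u hune huL q hq
    obtain ⟨hqQ, huq⟩ := hq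
    refine ⟨hqQ, ?_⟩
    simp only [Set.mem_insert_iff, Set.mem_singleton_iff, not_or]
    refine ⟨fun h => huL (h ▸ huq), fun h => hune (by rw [h] at huq; simpa using huq),
      fun h => by simp [h] at huq⟩
  -- the covering set T
  set T : Set (Set (Set (List α))) := insert {L} (insert (F []) (𝒫 Q')) with hTdef
  have hQ'fin : Q'.Finite := hLfin.subset Set.diff_subset
  have hTfin : T.Finite :=
    (Set.Finite.insert _ (Set.Finite.insert _ hQ'fin.powerset))
  have hcover : Set.range (lq (rev L)) ⊆ G '' T := by
    rintro _ ⟨w, rfl⟩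
    rw [key w]
    apply Set.mem_image_of_mem
    by_cases h1 : w.reverse ∈ L
    · rw [caseA _ h1]; exact Set.mem_insert _ _
    · rcases eq_or_ne w.reverse [] with h2 | h2
      · rw [h2]; exact Set.mem_insert_of_mem _ (Set.mem_insert _ _)
      · exact Set.mem_insert_of_mem _ (Set.mem_insert_of_mem _ (caseC _ h2 h1))
  have hranfin : (Set.range (lq (rev L))).Finite := (hTfin.image G).subset hcover
  refine ⟨hranfin, ?_⟩
  -- cardinality of Q'
  have hsub3 : ({L, {[]}, ∅} : Set (Set (List α))) ⊆ Q := by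
    rintro q (rfl | rfl | rfl) <;> assumption
  have h3card : ({L, {[]}, ∅} : Set (Set (List α))).ncard = 3 := by
    rw [Set.ncard_insert_of_notMem (by simp [hLεne, hLneq])
      ((Set.finite_singleton _).insert _),
      Set.ncard_insert_of_notMem (by simp [hEneq]) (Set.finite_singleton _),
      Set.ncard_singleton]
  have hQ'card : Q'.ncard = n - 3 := by
    rw [hQ'def, Set.ncard_diff hsub3 (((Set.finite_singleton _).insert _).insert _), h3card, hLn]
  have hTcard : T.ncard ≤ 2 ^ (n - 3) + 2 := by
    calc T.ncard ≤ (insert (F []) (𝒫 Q')).ncard + 1 := Set.ncard_insert_le _ _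
      _ ≤ (𝒫 Q').ncard + 1 + 1 := by
          have := Set.ncard_insert_le (F []) (𝒫 Q')
          omega
      _ ≤ 2 ^ (n - 3) + 2 := by
          have := ncard_powerset_le Q' hQ'fin
          rw [hQ'card] at this
          omega
  calc (Set.range (lq (rev L))).ncard ≤ (G '' T).ncard :=
        Set.ncard_le_ncard hcover (hTfin.image G)
    _ ≤ T.ncard := Set.ncard_image_le hTfin
    _ ≤ 2 ^ (n - 3) + 2 := hTcard
end

section
/- For n ≥ 4, let ℓ = 2^{n−3} − 1, let Σ = {a_1, …, a_ℓ}, and let S_1, …, S_ℓ enumerate all non-empty subsets of {1, …, n−3}. Define M = ⋃_{i=1}^{ℓ} a_i · (⋃_{j ∈ S_i} {a_j}). Then M consists only of two-letter words, hence M and its reversal L = M^R are subword-free, κ(M) = 2^{n−3} + 2, and κ(L) = n. -/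
theorem subwordFree_reversal_witness (n ℓ : ℕ) (hn : 4 ≤ n) (hℓ : ℓ = 2 ^ (n - 3) - 1)
    (hle : n - 3 ≤ ℓ)
    (S : Fin ℓ ≃ {s : Finset (Fin (n - 3)) // s.Nonempty})
    (M : Set (List (Fin ℓ)))
    (hM : M = {w | ∃ i : Fin ℓ, ∃ j ∈ (S i).1, w = [i, Fin.castLE hle j]}) :
    (∀ w ∈ M, w.length = 2) ∧
    SubwordFree M ∧ SubwordFree (rev M) ∧
    (Set.range (lq M)).ncard = 2 ^ (n - 3) + 2 ∧
    (Set.range (lq (rev M))).ncard = n := by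
  have hpow : 2 ≤ 2 ^ (n - 3) := Nat.one_lt_two_pow_iff.mpr (by omega)
  have hℓpos : 1 ≤ ℓ := by omega
  have hn3 : 1 ≤ n - 3 := by omega
  have hlen : ∀ w ∈ M, w.length = 2 := by
    rintro w hw
    rw [hM] at hw
    obtain ⟨i, j, hj, rfl⟩ := hw
    rfl
  have hlenR : ∀ w ∈ rev M, w.length = 2 := by
    rintro w ⟨u, hu, rfl⟩
    simp [hlen u hu]
  refine ⟨hlen, ?_, ?_, ?_, ?_⟩
  · intro u hu v hv hs
    exact hs.eq_of_length (by rw [hlen u hu, hlen v hv])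
  · intro u hu v hv hs
    exact hs.eq_of_length (by rw [hlenR u hu, hlenR v hv])
  -- quotients of M
  · set A : Fin ℓ → Set (List (Fin ℓ)) :=
      fun i => {x | ∃ j ∈ (S i).1, x = [Fin.castLE hle j]} with hA
    have hAinj : Function.Injective A := by
      intro i i' h
      apply S.injective
      apply Subtype.ext
      ext j
      constructor
      · intro hj
        have : [Fin.castLE hle j] ∈ A i := ⟨j, hj, rfl⟩
        rw [h] at this
        obtain ⟨j', hj', hej⟩ := this
        simp only [List.cons.injEq, and_true] at hej
        rwa [Fin.castLE_injective hle hej]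
      · intro hj
        have : [Fin.castLE hle j] ∈ A i' := ⟨j, hj, rfl⟩
        rw [← h] at this
        obtain ⟨j', hj', hej⟩ := this
        simp only [List.cons.injEq, and_true] at hej
        rwa [Fin.castLE_injective hle hej]
    obtain ⟨j0, hj0⟩ := (S ⟨0, hℓpos⟩).2
    have hMne : [(⟨0, hℓpos⟩ : Fin ℓ), Fin.castLE hle j0] ∈ M := by
      rw [hM]; exact ⟨_, j0, hj0, rfl⟩
    have hnil : lq M [] = M := by
      ext x; simp [lq]
    have hQ : ∀ i : Fin ℓ, lq M [i] = A i := by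
      intro i
      ext x
      simp only [lq, hM, hA, Set.mem_setOf_eq, List.cons_append, List.nil_append]
      constructor
      · rintro ⟨i', j, hj, he⟩
        simp only [List.cons.injEq] at he
        obtain ⟨rfl, rfl⟩ := he
        exact ⟨j, hj, rfl⟩
      · rintro ⟨j, hj, rfl⟩
        exact ⟨i, j, hj, rfl⟩
    have hsing : lq M [⟨0, hℓpos⟩, Fin.castLE hle j0] = {[]} := by
      ext x
      simp only [lq, hM, Set.mem_setOf_eq, List.cons_append, List.nil_append,
        Set.mem_singleton_iff]
      constructor
      · rintro ⟨i', j, hj, he⟩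
        simp only [List.cons.injEq] at he
        exact he.2.2
      · rintro rfl
        exact ⟨_, j0, hj0, rfl⟩
    have hemp : lq M [⟨0, hℓpos⟩, ⟨0, hℓpos⟩, ⟨0, hℓpos⟩] = ∅ := by
      ext x
      simp only [lq, hM, Set.mem_setOf_eq, Set.mem_empty_iff_false, iff_false]
      rintro ⟨i', j, hj, he⟩
      apply_fun List.length at he
      simp at he
    have hrange : Set.range (lq M) = insert M (insert {[]} (insert ∅ (Set.range A))) := by
      ext Q
      simp only [Set.mem_insert_iff, Set.mem_range]
      constructor
      · rintro ⟨w, rfl⟩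
        match w with
        | [] => exact Or.inl hnil
        | [i] => exact Or.inr (Or.inr (Or.inr ⟨i, (hQ i).symm⟩))
        | i :: k :: rest =>
          by_cases h : rest = [] ∧ ∃ j ∈ (S i).1, k = Fin.castLE hle j
          · obtain ⟨rfl, j, hj, rfl⟩ := h
            refine Or.inr (Or.inl ?_)
            ext x
            simp only [lq, hM, Set.mem_setOf_eq, List.cons_append, List.nil_append,
              Set.mem_singleton_iff]
            constructor
            · rintro ⟨i', j', hj', he⟩
              simp only [List.cons.injEq] at he
              exact he.2.2
            · rintro rfl
              exact ⟨i, j, hj, rfl⟩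
          · refine Or.inr (Or.inr (Or.inl ?_))
            ext x
            simp only [lq, hM, Set.mem_setOf_eq, List.cons_append,
              Set.mem_empty_iff_false, iff_false]
            rintro ⟨i', j, hj, he⟩
            simp only [List.cons.injEq] at he
            obtain ⟨rfl, rfl, he⟩ := he
            rw [List.append_eq_nil_iff] at he
            exact h ⟨he.1, j, hj, rfl⟩
      · rintro (rfl | rfl | rfl | ⟨i, rfl⟩)
        · exact ⟨[], hnil⟩
        · exact ⟨_, hsing⟩
        · exact ⟨_, hemp⟩
        · exact ⟨[i], hQ i⟩
    have hfin : (Set.range A).Finite := Set.finite_range A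
    have hcardA : (Set.range A).ncard = ℓ := by
      rw [← Set.image_univ, Set.ncard_image_of_injective _ hAinj, Set.ncard_univ,
        Nat.card_eq_fintype_card, Fintype.card_fin]
    have hAlen : ∀ i x, x ∈ A i → x.length = 1 := by
      rintro i x ⟨j, hj, rfl⟩; rfl
    have h1 : (∅ : Set (List (Fin ℓ))) ∉ Set.range A := by
      rintro ⟨i, hi⟩
      obtain ⟨j, hj⟩ := (S i).2
      have : [Fin.castLE hle j] ∈ A i := ⟨j, hj, rfl⟩
      rw [hi] at this
      exact this
    have h2 : ({[]} : Set (List (Fin ℓ))) ∉ insert ∅ (Set.range A) := by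
      rintro (h | ⟨i, hi⟩)
      · exact absurd h (by simp [Set.eq_empty_iff_forall_notMem])
      · have : ([] : List (Fin ℓ)) ∈ A i := by rw [hi]; rfl
        exact absurd (hAlen i _ this) (by simp)
    have h3 : M ∉ insert {[]} (insert ∅ (Set.range A)) := by
      have hm2 : ([(⟨0, hℓpos⟩ : Fin ℓ), Fin.castLE hle j0]).length = 2 := rfl
      rintro (h | h | ⟨i, hi⟩)
      · rw [h] at hMne; simp at hMne
      · rw [h] at hMne; exact hMne
      · rw [← hi] at hMne
        exact absurd (hAlen i _ hMne) (by simp)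
    rw [hrange, Set.ncard_insert_of_notMem h3 ((hfin.insert _).insert _),
      Set.ncard_insert_of_notMem h2 (hfin.insert _),
      Set.ncard_insert_of_notMem h1 hfin, hcardA]
    omega
  -- quotients of rev M
  · have hN : rev M = {w | ∃ i : Fin ℓ, ∃ j ∈ (S i).1, w = [Fin.castLE hle j, i]} := by
      ext w
      constructor
      · rintro ⟨u, hu, rfl⟩
        rw [hM] at hu
        obtain ⟨i, j, hj, rfl⟩ := hu
        exact ⟨i, j, hj, rfl⟩
      · rintro ⟨i, j, hj, rfl⟩
        exact ⟨[i, Fin.castLE hle j], by rw [hM]; exact ⟨i, j, hj, rfl⟩, rfl⟩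
    set B : Fin (n - 3) → Set (List (Fin ℓ)) :=
      fun j => {x | ∃ i : Fin ℓ, j ∈ (S i).1 ∧ x = [i]} with hB
    have hwit : ∀ j : Fin (n - 3), [S.symm ⟨{j}, Finset.singleton_nonempty j⟩] ∈ B j := by
      intro j
      refine ⟨_, ?_, rfl⟩
      rw [S.apply_symm_apply]
      exact Finset.mem_singleton_self j
    have hBinj : Function.Injective B := by
      intro j j' h
      have h1 : [S.symm ⟨{j}, Finset.singleton_nonempty j⟩] ∈ B j' := by
        rw [← h]; exact hwit j
      obtain ⟨i, hi, he⟩ := h1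
      simp only [List.cons.injEq, and_true] at he
      rw [← he, S.apply_symm_apply] at hi
      exact (Finset.mem_singleton.mp hi).symm
    obtain ⟨j0, hj0⟩ := (S ⟨0, hℓpos⟩).2
    have hNne : [Fin.castLE hle j0, (⟨0, hℓpos⟩ : Fin ℓ)] ∈ rev M := by
      rw [hN]; exact ⟨_, j0, hj0, rfl⟩
    have hnil : lq (rev M) [] = rev M := by ext x; simp [lq]
    have hQ : ∀ (k : Fin ℓ) (hk : (k : ℕ) < n - 3), lq (rev M) [k] = B ⟨k, hk⟩ := by
      intro k hk
      ext x
      simp only [lq, hN, hB, Set.mem_setOf_eq, List.cons_append, List.nil_append]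
      constructor
      · rintro ⟨i, j, hj, he⟩
        simp only [List.cons.injEq] at he
        obtain ⟨hkj, rfl⟩ := he
        have : j = ⟨k, hk⟩ := by
          apply Fin.ext
          simpa using congrArg Fin.val hkj.symm
        exact ⟨i, this ▸ hj, rfl⟩
      · rintro ⟨i, hi, rfl⟩
        exact ⟨i, ⟨k, hk⟩, hi, by simp [Fin.ext_iff]⟩
    have hQbig : ∀ k : Fin ℓ, ¬ (k : ℕ) < n - 3 → lq (rev M) [k] = ∅ := by
      intro k hk
      ext x
      simp only [lq, hN, Set.mem_setOf_eq, List.cons_append, List.nil_append,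
        Set.mem_empty_iff_false, iff_false]
      rintro ⟨i, j, hj, he⟩
      simp only [List.cons.injEq] at he
      exact hk (he.1 ▸ j.isLt)
    have hsing : lq (rev M) [Fin.castLE hle j0, ⟨0, hℓpos⟩] = {[]} := by
      ext x
      simp only [lq, hN, Set.mem_setOf_eq, List.cons_append, List.nil_append,
        Set.mem_singleton_iff]
      constructor
      · rintro ⟨i, j, hj, he⟩
        simp only [List.cons.injEq] at he
        exact he.2.2
      · rintro rfl
        exact ⟨_, j0, hj0, rfl⟩
    have hemp : lq (rev M) [⟨0, hℓpos⟩, ⟨0, hℓpos⟩, ⟨0, hℓpos⟩] = ∅ := by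
      ext x
      simp only [lq, hN, Set.mem_setOf_eq, Set.mem_empty_iff_false, iff_false]
      rintro ⟨i, j, hj, he⟩
      apply_fun List.length at he
      simp at he
    have hrange : Set.range (lq (rev M)) =
        insert (rev M) (insert {[]} (insert ∅ (Set.range B))) := by
      ext Q
      simp only [Set.mem_insert_iff, Set.mem_range]
      constructor
      · rintro ⟨w, rfl⟩
        match w with
        | [] => exact Or.inl hnil
        | [k] =>
          by_cases hk : (k : ℕ) < n - 3
          · exact Or.inr (Or.inr (Or.inr ⟨⟨k, hk⟩, (hQ k hk).symm⟩))
          · exact Or.inr (Or.inr (Or.inl (hQbig k hk)))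
        | k :: a :: rest =>
          by_cases h : rest = [] ∧ ∃ b : Fin ℓ, ∃ j ∈ (S b).1,
              k = Fin.castLE hle j ∧ a = b
          · obtain ⟨rfl, b, j, hj, rfl, rfl⟩ := h
            refine Or.inr (Or.inl ?_)
            ext x
            simp only [lq, hN, Set.mem_setOf_eq, List.cons_append, List.nil_append,
              Set.mem_singleton_iff]
            constructor
            · rintro ⟨c, j2, hj2, he⟩
              simp only [List.cons.injEq] at he
              exact he.2.2
            · rintro rfl
              exact ⟨a, j, hj, rfl⟩
          · refine Or.inr (Or.inr (Or.inl ?_))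
            ext x
            simp only [lq, hN, Set.mem_setOf_eq, List.cons_append,
              Set.mem_empty_iff_false, iff_false]
            rintro ⟨b, j, hj, he⟩
            simp only [List.cons.injEq] at he
            obtain ⟨rfl, rfl, he⟩ := he
            rw [List.append_eq_nil_iff] at he
            exact h ⟨he.1, a, j, hj, rfl, rfl⟩
      · rintro (rfl | rfl | rfl | ⟨j, rfl⟩)
        · exact ⟨[], hnil⟩
        · exact ⟨_, hsing⟩
        · exact ⟨_, hemp⟩
        · exact ⟨[Fin.castLE hle j], hQ _ j.isLt⟩
    have hfin : (Set.range B).Finite := Set.finite_range B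
    have hcardB : (Set.range B).ncard = n - 3 := by
      rw [← Set.image_univ, Set.ncard_image_of_injective _ hBinj, Set.ncard_univ,
        Nat.card_eq_fintype_card, Fintype.card_fin]
    have hBlen : ∀ j x, x ∈ B j → x.length = 1 := by
      rintro j x ⟨i, hi, rfl⟩; rfl
    have h1 : (∅ : Set (List (Fin ℓ))) ∉ Set.range B := by
      rintro ⟨j, hj⟩
      have := hwit j
      rw [hj] at this
      exact this
    have h2 : ({[]} : Set (List (Fin ℓ))) ∉ insert ∅ (Set.range B) := by
      rintro (h | ⟨j, hj⟩)
      · exact absurd h (by simp [Set.eq_empty_iff_forall_notMem])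
      · have : ([] : List (Fin ℓ)) ∈ B j := by rw [hj]; rfl
        exact absurd (hBlen j _ this) (by simp)
    have h3 : rev M ∉ insert {[]} (insert ∅ (Set.range B)) := by
      rintro (h | h | ⟨j, hj⟩)
      · rw [h] at hNne; simp at hNne
      · rw [h] at hNne; exact hNne
      · rw [← hj] at hNne
        exact absurd (hBlen j _ hNne) (by simp)
    rw [hrange, Set.ncard_insert_of_notMem h3 ((hfin.insert _).insert _),
      Set.ncard_insert_of_notMem h2 (hfin.insert _),
      Set.ncard_insert_of_notMem h1 hfin, hcardB]
    omega
end

section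
/- Let L be a subword-free language with κ(L) = n ≥ 4 whose quotients are linearly ordered as L = L_1 ≺ L_2 ≺ ⋯ ≺ L_{n−1} = {ε} ≺ L_n = ∅ consistently with positive reachability. If L_w = L_2 for some word w, then w has length 1. -/
lemma lq_concat {α : Type*} (L : Set (List α)) (y : List α) (a : α) :
    {x | a :: x ∈ lq L y} = lq L (y ++ [a]) := by
  ext x; simp [lq, List.append_assoc]

theorem subwordFree_second_quotient_by_letter {α : Type*} (L : Set (List α)) (n : ℕ)
    (hn : 4 ≤ n) (hfree : SubwordFree L)
    (Q : Fin n → Set (List α)) (hinj : Function.Injective Q)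
    (hrange : Set.range Q = Set.range (lq L))
    (hQ0 : Q ⟨0, by omega⟩ = L)
    (hQeps : Q ⟨n - 2, by omega⟩ = {([] : List α)})
    (hQempty : Q ⟨n - 1, by omega⟩ = (∅ : Set (List α)))
    (horder : ∀ (i j : Fin n) (a : α),
      {x | a :: x ∈ Q i} = Q j → (i < j ∨ (Q i = ∅ ∧ Q j = ∅)))
    (w : List α) (hw : lq L w = Q ⟨1, by omega⟩) :
    w.length = 1 := by
  -- Q 1 is nonempty
  have hQ1ne : Q ⟨1, by omega⟩ ≠ ∅ := by
    intro h
    have : (⟨1, by omega⟩ : Fin n) = ⟨n - 1, by omega⟩ := hinj (h.trans hQempty.symm)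
    have := Fin.mk.injEq 1 (by omega : 1 < n) (n-1) (by omega) ▸ this
    omega
  -- L is nonempty
  have hLne : L ≠ ∅ := by
    intro h
    apply hQ1ne
    rw [← hw, h]
    ext x; simp [lq]
  -- w ≠ []
  have hwne : w ≠ [] := by
    intro h
    subst h
    have hL : lq L [] = L := by ext x; simp [lq]
    have : (⟨0, by omega⟩ : Fin n) = ⟨1, by omega⟩ := hinj (by rw [hQ0, ← hL, hw])
    simpa using this
  -- write w = y ++ [a]
  obtain ⟨y, a, rfl⟩ : ∃ y a, w = y ++ [a] := by
    rcases List.eq_nil_or_concat w with h | ⟨y, a, h⟩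
    · exact absurd h hwne
    · exact ⟨y, a, by simpa [List.concat_eq_append] using h⟩
  -- the quotient by y is some Q j
  obtain ⟨j, hj⟩ : ∃ j, Q j = lq L y := by
    have : lq L y ∈ Set.range Q := hrange ▸ Set.mem_range_self y
    exact this
  have hstep : {x | a :: x ∈ Q j} = Q ⟨1, by omega⟩ := by
    rw [hj, lq_concat, hw]
  rcases horder j ⟨1, by omega⟩ a hstep with hlt | ⟨_, h1⟩
  · -- j < 1, so j = 0, so lq L y = L
    have hj0 : j = ⟨0, by omega⟩ := by
      apply Fin.ext
      have := hlt
      simp [Fin.lt_def] at this ⊢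
      omega
    rw [hj0, hQ0] at hj
    -- now show y = []
    rcases List.eq_nil_or_concat y with h | ⟨z, b, h⟩
    · subst h; simp
    · exfalso
      subst h
      obtain ⟨i, hi⟩ : ∃ i, Q i = lq L z := by
        have : lq L z ∈ Set.range Q := hrange ▸ Set.mem_range_self z
        exact this
      have hstep2 : {x | b :: x ∈ Q i} = Q ⟨0, by omega⟩ := by
        rw [hi, lq_concat, hQ0, ← List.concat_eq_append, ← hj]
      rcases horder i ⟨0, by omega⟩ b hstep2 with hlt2 | ⟨_, h0⟩
      · exact absurd hlt2 (by simp [Fin.lt_def])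
      · exact hLne (hQ0 ▸ h0)
  · exact absurd h1 hQ1ne
end
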